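/- Let γ > 0, p > 5 and ω > γ²/4. Assume E(φ_ω) > 0 and S_ω(φ_ω) = d(ω). Then there is no map u : [0,∞) → H¹(ℝ) with u(0) ∈ 𝓑_ω such that: (i) E(u(t)) = E(u(0)) and ‖u(t)‖_{L²} = ‖u(0)‖_{L²} for all t ≥ 0; (ii) t ↦ K_ω(u(t)) and t ↦ P(u(t)) are continuous on [0,∞); and (iii) there exists a twice differentiable function f : [0,∞) → [0,∞) with f''(t) = 8 P(u(t)) for all t ≥ 0. (In particular, any solution of the nonlinear Schrödinger equation with attractive delta potential, which enjoys properties (i)–(iii) by conservation laws and the virial identity, cannot exist globally if its initial datum lies in 𝓑_ω.) -/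

import Mathlib

open MeasureTheory Set
open scoped ENNReal

noncomputable section

/-- Inverse hyperbolic tangent. -/
def artanh (x : ℝ) : ℝ := Real.log ((1 + x) / (1 - x)) / 2

/-- Squared `L²` norm of `v`. -/
def l2Sq (v : ℝ → ℂ) : ℝ := ∫ x : ℝ, ‖v x‖ ^ 2

/-- Squared `L²` norm of the derivative of `v`. -/
def gradSq (v : ℝ → ℂ) : ℝ := ∫ x : ℝ, ‖deriv v x‖ ^ 2

/-- `∫ |v|^(p+1)`, i.e. `‖v‖_{L^{p+1}}^{p+1}`. -/
def lpPow (p : ℝ) (v : ℝ → ℂ) : ℝ := ∫ x : ℝ, ‖v x‖ ^ (p + 1)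

/-- `v ∈ H¹(ℝ)`, expressed via its continuous representative: `v` is square
integrable, absolutely continuous with a.e. derivative `deriv v`, which is
square integrable. -/
def MemH1 (v : ℝ → ℂ) : Prop :=
  Continuous v ∧ MemLp v 2 volume ∧ MemLp (deriv v) 2 volume ∧
    ∀ x : ℝ, v x = v 0 + ∫ t in (0:ℝ)..x, deriv v t

/-- The energy functional `E`. -/
def En (γ p : ℝ) (v : ℝ → ℂ) : ℝ :=
  gradSq v / 2 - γ / 2 * ‖v 0‖ ^ 2 - lpPow p v / (p + 1)

/-- The Nehari functional `K_ω`. -/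
def Kfun (γ p ω : ℝ) (v : ℝ → ℂ) : ℝ :=
  gradSq v + ω * l2Sq v - γ * ‖v 0‖ ^ 2 - lpPow p v

/-- The virial functional `P`. -/
def Pfun (γ p : ℝ) (v : ℝ → ℂ) : ℝ :=
  gradSq v - γ / 2 * ‖v 0‖ ^ 2 - (p - 1) / (2 * (p + 1)) * lpPow p v

/-- The action functional `S_ω`. -/
def Sfun (γ p ω : ℝ) (v : ℝ → ℂ) : ℝ := En γ p v + ω / 2 * l2Sq v

/-- The minimal action `d(ω)` on the Nehari manifold. -/
def dInf (γ p ω : ℝ) : ℝ :=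
  sInf {s : ℝ | ∃ v : ℝ → ℂ, MemH1 v ∧ v ≠ 0 ∧ Kfun γ p ω v = 0 ∧ s = Sfun γ p ω v}

/-- The explicit standing wave profile `φ_ω`. -/
def phi (γ p ω : ℝ) (x : ℝ) : ℝ :=
  ((p + 1) * ω / 2 *
      (1 / Real.cosh ((p - 1) * Real.sqrt ω / 2 * |x| + artanh (γ / (2 * Real.sqrt ω)))) ^ 2)
    ^ (1 / (p - 1))

/-- `φ_ω` as a complex valued function. -/
def phiC (γ p ω : ℝ) : ℝ → ℂ := fun x => (phi γ p ω x : ℂ)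

/-- The `L²`-invariant scaling `v^λ(x) = λ^{1/2} v(λ x)`. -/
def scale (l : ℝ) (v : ℝ → ℂ) : ℝ → ℂ := fun x => (Real.sqrt l : ℂ) * v (l * x)

/-- The set `𝓑_ω`. -/
def inB (γ p ω : ℝ) (v : ℝ → ℂ) : Prop :=
  MemH1 v ∧ 0 < En γ p v ∧ En γ p v < En γ p (phiC γ p ω) ∧
    l2Sq v = l2Sq (phiC γ p ω) ∧ Pfun γ p v < 0 ∧ Kfun γ p ω v < 0

/-!
The mass-preserving scaling `v ↦ v^λ` turns the Nehari functional `K_ω(v^λ)` into an explicit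
function of `λ` that equals `ω‖v‖²` at `λ = 0` and `K_ω(v) < 0` at `λ = 1`, so some `v^λ` with
`0 < λ < 1` lies on the Nehari manifold. Comparing `S_ω(v^λ) ≥ d(ω)` with the estimate
`S_ω(v^λ) ≤ S_ω(v) - λ(1-λ) P(v) - (1-λ)² E(v)` (Bernoulli's inequality for `λ^((p-3)/2)`,
which needs `p ≥ 5`)
gives `P(v) ≤ 4 (S_ω(v) - d(ω))` whenever `K_ω(v) < 0`, `E(v) ≥ 0` and `S_ω(v) < d(ω)`.

Along the flow `S_ω` is conserved and stays below `d(ω) = S_ω(φ_ω)`, so `K_ω(u(t))` can never vanish and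
remains negative. Hence `f'' = 8 P(u(t))` is bounded above by a negative constant, and the
nonnegative function `f` would lie below a downward parabola.
-/

lemma memLp_comp_mul_left {E : Type*} [NormedAddCommGroup E] {q : ℝ≥0∞} {g : ℝ → E}
    (hg : MemLp g q) {l : ℝ} (hl : l ≠ 0) : MemLp (fun x => g (l * x)) q := by
  refine MemLp.comp_of_map ?_ (measurable_const_mul l).aemeasurable
  rw [Real.map_volume_mul_left hl]
  exact hg.smul_measure ENNReal.ofReal_ne_top

lemma integral_comp_mul_left_of_pos {l : ℝ} (hl : 0 < l) (g : ℝ → ℝ) :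
    ∫ x, g (l * x) = l⁻¹ * ∫ x, g x := by
  rw [Measure.integral_comp_mul_left, abs_of_pos (inv_pos.2 hl), smul_eq_mul]

lemma norm_scale_apply (l : ℝ) (v : ℝ → ℂ) (x : ℝ) :
    ‖scale l v x‖ = √l * ‖v (l * x)‖ := by
  rw [scale, norm_mul, Complex.norm_real, Real.norm_of_nonneg (Real.sqrt_nonneg l)]

lemma norm_scale_zero_sq {l : ℝ} (hl : 0 ≤ l) (v : ℝ → ℂ) :
    ‖scale l v 0‖ ^ 2 = l * ‖v 0‖ ^ 2 := by
  rw [norm_scale_apply, mul_zero, mul_pow, Real.sq_sqrt hl]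

lemma deriv_scale (l : ℝ) (v : ℝ → ℂ) : deriv (scale l v) = l • scale l (deriv v) := by
  funext x
  change deriv (fun y => (√l : ℂ) * v (l * y)) x = l • ((√l : ℂ) * deriv v (l * x))
  rw [deriv_const_mul_field, deriv_comp_mul_left, mul_smul_comm]

lemma integral_norm_scale_rpow {l : ℝ} (hl : 0 < l) (v : ℝ → ℂ) (q : ℝ) :
    ∫ x, ‖scale l v x‖ ^ q = l ^ (q / 2 - 1) * ∫ x, ‖v x‖ ^ q := by
  have hpt : ∀ x, ‖scale l v x‖ ^ q = l ^ (q / 2) * ‖v (l * x)‖ ^ q := fun x => by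
    rw [norm_scale_apply, Real.mul_rpow (Real.sqrt_nonneg l) (norm_nonneg _),
      Real.sqrt_eq_rpow, ← Real.rpow_mul hl.le, one_div_mul_eq_div]
  simp_rw [hpt]
  rw [integral_const_mul, integral_comp_mul_left_of_pos hl (fun y => ‖v y‖ ^ q), ← mul_assoc,
    ← Real.rpow_neg_one, ← Real.rpow_add hl, sub_eq_add_neg]

lemma l2Sq_scale {l : ℝ} (hl : 0 < l) (v : ℝ → ℂ) : l2Sq (scale l v) = l2Sq v := by
  simp only [l2Sq, ← Real.rpow_two]
  rw [integral_norm_scale_rpow hl]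
  norm_num

lemma gradSq_scale {l : ℝ} (hl : 0 < l) (v : ℝ → ℂ) :
    gradSq (scale l v) = l ^ 2 * gradSq v := by
  have hpt : ∀ x, ‖(l • scale l (deriv v)) x‖ ^ 2 = l ^ 2 * ‖scale l (deriv v) x‖ ^ 2 :=
    fun x => by rw [Pi.smul_apply, norm_smul, Real.norm_of_nonneg hl.le, mul_pow]
  simp only [gradSq, deriv_scale, hpt]
  rw [integral_const_mul]
  exact congrArg _ (l2Sq_scale hl (deriv v))

lemma lpPow_scale {l : ℝ} (hl : 0 < l) (p : ℝ) (v : ℝ → ℂ) :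
    lpPow p (scale l v) = l ^ ((p - 1) / 2) * lpPow p v := by
  rw [lpPow, integral_norm_scale_rpow hl, lpPow]
  congr 2
  ring

lemma memH1_scale {l : ℝ} (hl : 0 < l) {v : ℝ → ℂ} (hv : MemH1 v) : MemH1 (scale l v) := by
  obtain ⟨hc, hL2, hdL2, hftc⟩ := hv
  refine ⟨continuous_const.mul (hc.comp (continuous_const_mul l)),
    (memLp_comp_mul_left hL2 hl.ne').const_mul _, ?_, fun x => ?_⟩
  · rw [deriv_scale]
    exact ((memLp_comp_mul_left hdL2 hl.ne').const_mul _).const_smul _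
  · have hint : ∫ t in (0:ℝ)..x, deriv (scale l v) t = √l * (v (l * x) - v 0) := by
      simp only [deriv_scale, Pi.smul_apply, scale, ← mul_smul_comm]
      rw [intervalIntegral.integral_const_mul, intervalIntegral.integral_smul,
        intervalIntegral.smul_integral_comp_mul_left, mul_zero, hftc (l * x), add_sub_cancel_left]
    simp only [scale, mul_zero, hint]
    ring

lemma l2Sq_nonneg (v : ℝ → ℂ) : 0 ≤ l2Sq v :=
  integral_nonneg fun _ => by positivity

lemma lpPow_nonneg (p : ℝ) (v : ℝ → ℂ) : 0 ≤ lpPow p v :=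
  integral_nonneg fun _ => by positivity

lemma l2Sq_pos {v : ℝ → ℂ} (hv : MemH1 v) (hv0 : v ≠ 0) : 0 < l2Sq v := by
  refine (l2Sq_nonneg v).lt_of_ne fun h => hv0 ?_
  have hint : Integrable (fun x => ‖v x‖ ^ 2) :=
    (memLp_two_iff_integrable_sq_norm hv.1.aestronglyMeasurable).1 hv.2.1
  have hae : (fun x => ‖v x‖ ^ 2) =ᵐ[volume] 0 :=
    (integral_eq_zero_iff_of_nonneg (fun _ => by positivity) hint).1 h.symm
  refine (hv.1.ae_eq_iff_eq volume continuous_zero).1 ?_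
  filter_upwards [hae] with x hx
  simpa using hx

lemma scale_ne_zero {l : ℝ} (hl : 0 < l) {v : ℝ → ℂ} (hv : MemH1 v) (hv0 : v ≠ 0) :
    scale l v ≠ 0 := fun h =>
  (l2Sq_pos hv hv0).ne' (by rw [← l2Sq_scale hl v, h]; simp [l2Sq])

section Functionals

variable {γ p ω : ℝ}

lemma En_zero (hp : p + 1 ≠ 0) : En γ p 0 = 0 := by
  simp [En, gradSq, lpPow, Real.zero_rpow hp]

lemma Kfun_scale {l : ℝ} (hl : 0 < l) (v : ℝ → ℂ) :
    Kfun γ p ω (scale l v) =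
      l ^ 2 * gradSq v + ω * l2Sq v - γ * (l * ‖v 0‖ ^ 2) - l ^ ((p - 1) / 2) * lpPow p v := by
  rw [Kfun, gradSq_scale hl, l2Sq_scale hl, lpPow_scale hl, norm_scale_zero_sq hl.le]

lemma Sfun_scale {l : ℝ} (hl : 0 < l) (v : ℝ → ℂ) :
    Sfun γ p ω (scale l v) =
      l ^ 2 * gradSq v / 2 + ω / 2 * l2Sq v - γ / 2 * (l * ‖v 0‖ ^ 2)
        - l ^ ((p - 1) / 2) * lpPow p v / (p + 1) := by
  rw [Sfun, En, gradSq_scale hl, l2Sq_scale hl, lpPow_scale hl, norm_scale_zero_sq hl.le]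
  ring

lemma Sfun_eq_of_Kfun_eq_zero {v : ℝ → ℂ} (hp : p + 1 ≠ 0) (hK : Kfun γ p ω v = 0) :
    Sfun γ p ω v = (p - 1) / (2 * (p + 1)) * lpPow p v := by
  rw [Kfun] at hK
  rw [Sfun, En]
  field_simp
  linear_combination (p + 1) * hK

lemma dInf_le (hp : 1 ≤ p) {v : ℝ → ℂ} (hv : MemH1 v) (hv0 : v ≠ 0)
    (hK : Kfun γ p ω v = 0) : dInf γ p ω ≤ Sfun γ p ω v := by
  refine csInf_le ⟨0, ?_⟩ ⟨v, hv, hv0, hK, rfl⟩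
  rintro _ ⟨w, -, -, hKw, rfl⟩
  rw [Sfun_eq_of_Kfun_eq_zero (by linarith) hKw]
  have := lpPow_nonneg p w
  have : 0 ≤ (p - 1) / (2 * (p + 1)) := div_nonneg (by linarith) (by linarith)
  positivity

lemma exists_Kfun_scale_eq_zero (hp : 1 < p) (hω : 0 < ω) {v : ℝ → ℂ} (hm : 0 < l2Sq v)
    (hK : Kfun γ p ω v < 0) : ∃ t ∈ Ioo (0 : ℝ) 1, Kfun γ p ω (scale t v) = 0 := by
  set k : ℝ → ℝ := fun t => t ^ 2 * gradSq v + ω * l2Sq v - γ * (t * ‖v 0‖ ^ 2)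
    - t ^ ((p - 1) / 2) * lpPow p v
  have hexp : 0 < (p - 1) / 2 := by linarith
  have hk : Continuous k := by
    have := Real.continuous_rpow_const hexp.le
    fun_prop
  have hk0 : k 0 = ω * l2Sq v := by simp [k, Real.zero_rpow hexp.ne']
  have hk1 : k 1 = Kfun γ p ω v := by simp [k, Kfun]
  obtain ⟨t, ht, hkt⟩ := intermediate_value_Ioo' zero_le_one hk.continuousOn
    (show (0 : ℝ) ∈ Ioo (k 1) (k 0) by rw [hk0, hk1]; exact ⟨hK, by positivity⟩)
  exact ⟨t, ht, by rw [Kfun_scale ht.1]; exact hkt⟩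

lemma Sfun_scale_le (hp : 5 ≤ p) {t : ℝ} (ht : 0 < t) (v : ℝ → ℂ) :
    Sfun γ p ω (scale t v) ≤
      Sfun γ p ω v - t * (1 - t) * Pfun γ p v - (1 - t) ^ 2 * En γ p v := by
  have hbern : 1 + (p - 3) / 2 * (t - 1) ≤ t ^ ((p - 3) / 2) := by
    simpa using one_add_mul_self_le_rpow_one_add (by linarith : (-1 : ℝ) ≤ t - 1)
      (by linarith : (1 : ℝ) ≤ (p - 3) / 2)
  have hsplit : t ^ ((p - 1) / 2) = t * t ^ ((p - 3) / 2) := by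
    rw [← Real.rpow_one_add' ht.le (by linarith)]
    ring_nf
  have hp1 : 0 < p + 1 := by linarith
  have hL := lpPow_nonneg p v
  calc Sfun γ p ω (scale t v)
      ≤ t ^ 2 * gradSq v / 2 + ω / 2 * l2Sq v - γ / 2 * (t * ‖v 0‖ ^ 2)
        - t * (1 + (p - 3) / 2 * (t - 1)) * lpPow p v / (p + 1) := by
        rw [Sfun_scale ht, hsplit]
        gcongr
    _ = Sfun γ p ω v - t * (1 - t) * Pfun γ p v - (1 - t) ^ 2 * En γ p v := by
        rw [Sfun, En, Pfun]
        field_simp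
        ring

lemma Pfun_le_of_Kfun_neg (hp : 5 ≤ p) (hω : 0 < ω) {v : ℝ → ℂ} (hv : MemH1 v) (hv0 : v ≠ 0)
    (hE : 0 ≤ En γ p v) (hK : Kfun γ p ω v < 0) (hS : Sfun γ p ω v < dInf γ p ω) :
    Pfun γ p v ≤ 4 * (Sfun γ p ω v - dInf γ p ω) := by
  obtain ⟨t, ⟨ht0, ht1⟩, hKt⟩ := exists_Kfun_scale_eq_zero (by linarith) hω (l2Sq_pos hv hv0) hK
  have hd := dInf_le (by linarith) (memH1_scale ht0 hv) (scale_ne_zero ht0 hv hv0) hKt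
  have hS_scale := Sfun_scale_le (γ := γ) (ω := ω) hp ht0 v
  have hPt : t * (1 - t) * Pfun γ p v ≤ Sfun γ p ω v - dInf γ p ω := by
    linarith [mul_nonneg (sq_nonneg (1 - t)) hE]
  have hP : Pfun γ p v < 0 :=
    neg_of_mul_neg_right (hPt.trans_lt (by linarith)) (mul_pos ht0 (by linarith)).le
  calc Pfun γ p v ≤ 4 * (t * (1 - t) * Pfun γ p v) := by nlinarith [sq_nonneg (1 - 2 * t)]
    _ ≤ 4 * (Sfun γ p ω v - dInf γ p ω) := by linarith

end Functionals

lemma neg_of_continuousOn_Ici_of_ne_zero {g : ℝ → ℝ} (hg : ContinuousOn g (Ici 0))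
    (h0 : g 0 < 0) (hne : ∀ t, 0 ≤ t → g t ≠ 0) {t : ℝ} (ht : 0 ≤ t) : g t < 0 := by
  by_contra! h
  obtain ⟨τ, hτ, hgτ⟩ := intermediate_value_Icc ht (hg.mono Icc_subset_Ici_self) ⟨h0.le, h⟩
  exact hne τ hτ.1 hgτ

lemma le_of_hasDerivWithinAt_Ici_of_deriv_le {g g' B B' : ℝ → ℝ}
    (hg : ∀ t, 0 ≤ t → HasDerivWithinAt g (g' t) (Ici 0) t)
    (hB : ∀ t, 0 ≤ t → HasDerivWithinAt B (B' t) (Ici 0) t)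
    (h0 : g 0 ≤ B 0) (hle : ∀ t, 0 ≤ t → g' t ≤ B' t) {t : ℝ} (ht : 0 ≤ t) : g t ≤ B t :=
  image_le_of_deriv_right_le_deriv_boundary
    (fun x hx => (hg x hx.1).continuousWithinAt.mono Icc_subset_Ici_self)
    (fun x hx => (hg x hx.1).mono (Ici_subset_Ici.2 hx.1)) h0
    (fun x hx => (hB x hx.1).continuousWithinAt.mono Icc_subset_Ici_self)
    (fun x hx => (hB x hx.1).mono (Ici_subset_Ici.2 hx.1)) (fun x hx => hle x hx.1) ⟨ht, le_rfl⟩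

lemma exists_neg_of_hasDerivWithinAt_Ici_le_neg {f f' f'' : ℝ → ℝ} {ε : ℝ} (hε : 0 < ε)
    (hf : ∀ t, 0 ≤ t → HasDerivWithinAt f (f' t) (Ici 0) t)
    (hf' : ∀ t, 0 ≤ t → HasDerivWithinAt f' (f'' t) (Ici 0) t)
    (hf'' : ∀ t, 0 ≤ t → f'' t ≤ -ε) : ∃ t, 0 ≤ t ∧ f t < 0 := by
  have hslope : ∀ t, 0 ≤ t → f' t ≤ f' 0 - ε * t := fun t ht =>
    le_of_hasDerivWithinAt_Ici_of_deriv_le hf'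
      (fun s _ => (((hasDerivAt_id s).const_mul ε).const_sub (f' 0)).hasDerivWithinAt)
      (by simp) (fun s hs => by simpa using hf'' s hs) ht
  have hquad : ∀ t, 0 ≤ t → f t ≤ f 0 + f' 0 * t - ε / 2 * t ^ 2 := fun t ht =>
    le_of_hasDerivWithinAt_Ici_of_deriv_le hf
      (fun s _ => ((((hasDerivAt_id s).const_mul (f' 0)).const_add (f 0)).sub
        ((hasDerivAt_pow 2 s).const_mul (ε / 2))).hasDerivWithinAt)
      (by simp)
      (fun s hs => (hslope s hs).trans_eq (by
        simp only [mul_one, Nat.cast_ofNat, Nat.add_one_sub_one, pow_one]; ring)) ht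
  set T := 2 * (|f 0| + |f' 0| + 1) / ε + 1
  have hT : 2 * (|f 0| + |f' 0| + 1) ≤ ε * (T - 1) := by
    simp only [T, add_sub_cancel_right]
    rw [mul_div_cancel₀ _ hε.ne']
  have hT1 : 1 ≤ T := le_add_of_nonneg_left (by positivity)
  refine ⟨T, by linarith, (hquad T (by linarith)).trans_lt ?_⟩
  nlinarith [le_abs_self (f 0), le_abs_self (f' 0), abs_nonneg (f 0), abs_nonneg (f' 0)]

theorem stmt12_general (γ p ω : ℝ) (hp : 5 < p) (hω : γ ^ 2 / 4 < ω)
    (hd : Sfun γ p ω (phiC γ p ω) = dInf γ p ω) :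
    ¬ ∃ (u : ℝ → ℝ → ℂ) (f f' : ℝ → ℝ),
      (∀ t : ℝ, 0 ≤ t → MemH1 (u t)) ∧
      inB γ p ω (u 0) ∧
      (∀ t : ℝ, 0 ≤ t → En γ p (u t) = En γ p (u 0) ∧ l2Sq (u t) = l2Sq (u 0)) ∧
      ContinuousOn (fun t => Kfun γ p ω (u t)) (Ici (0:ℝ)) ∧
      ContinuousOn (fun t => Pfun γ p (u t)) (Ici (0:ℝ)) ∧
      (∀ t : ℝ, 0 ≤ t → 0 ≤ f t) ∧
      (∀ t : ℝ, 0 ≤ t → HasDerivWithinAt f (f' t) (Ici (0:ℝ)) t ∧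
        HasDerivWithinAt f' (8 * Pfun γ p (u t)) (Ici (0:ℝ)) t) := by
  rintro ⟨u, f, f', hH1, ⟨-, hE0, hElt, hmass, -, hK0⟩, hcons, hKcont, -, hf0, hder⟩
  have hω0 : 0 < ω := lt_of_le_of_lt (by positivity) hω
  have hSt : ∀ t, 0 ≤ t → Sfun γ p ω (u t) = Sfun γ p ω (u 0) := fun t ht => by
    rw [Sfun, Sfun, (hcons t ht).1, (hcons t ht).2]
  have hS : ∀ t, 0 ≤ t → Sfun γ p ω (u t) < dInf γ p ω := fun t ht => by
    rw [hSt t ht, Sfun, hmass, ← hd, Sfun]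
    linarith
  have hne : ∀ t, 0 ≤ t → u t ≠ 0 := fun t ht h => by
    rw [← (hcons t ht).1, h, En_zero (by linarith : 0 < p + 1).ne'] at hE0
    exact hE0.false
  have hK : ∀ t, 0 ≤ t → Kfun γ p ω (u t) < 0 := fun t ht =>
    neg_of_continuousOn_Ici_of_ne_zero hKcont hK0
      (fun s hs hKs => (hS s hs).not_ge (dInf_le (by linarith) (hH1 s hs) (hne s hs) hKs)) ht
  have hP : ∀ t, 0 ≤ t → 8 * Pfun γ p (u t) ≤ -(32 * (dInf γ p ω - Sfun γ p ω (u 0))) :=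
    fun t ht => by
      have := Pfun_le_of_Kfun_neg hp.le hω0 (hH1 t ht) (hne t ht)
        (by rw [(hcons t ht).1]; exact hE0.le) (hK t ht) (hS t ht)
      rw [hSt t ht] at this
      linarith
  obtain ⟨t, ht, hft⟩ := exists_neg_of_hasDerivWithinAt_Ici_le_neg
    (by linarith [hS 0 le_rfl]) (fun t ht => (hder t ht).1) (fun t ht => (hder t ht).2) hP
  exact (hf0 t ht).not_gt hft

/-- no global flow with conserved quantities and virial identity can
start in `𝓑_ω`. -/
theorem stmt12 (γ p ω : ℝ) (hγ : 0 < γ) (hp : 5 < p) (hω : γ ^ 2 / 4 < ω)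
    (hEφ : 0 < En γ p (phiC γ p ω)) (hd : Sfun γ p ω (phiC γ p ω) = dInf γ p ω) :
    ¬ ∃ (u : ℝ → ℝ → ℂ) (f f' : ℝ → ℝ),
      (∀ t : ℝ, 0 ≤ t → MemH1 (u t)) ∧
      inB γ p ω (u 0) ∧
      (∀ t : ℝ, 0 ≤ t → En γ p (u t) = En γ p (u 0) ∧ l2Sq (u t) = l2Sq (u 0)) ∧
      ContinuousOn (fun t => Kfun γ p ω (u t)) (Ici (0:ℝ)) ∧
      ContinuousOn (fun t => Pfun γ p (u t)) (Ici (0:ℝ)) ∧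
      (∀ t : ℝ, 0 ≤ t → 0 ≤ f t) ∧
      (∀ t : ℝ, 0 ≤ t → HasDerivWithinAt f (f' t) (Ici (0:ℝ)) t ∧
        HasDerivWithinAt f' (8 * Pfun γ p (u t)) (Ici (0:ℝ)) t) :=
  stmt12_general γ p ω hp hω hd
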